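/- arXiv:2305.11637 — 4 statements merged into one kernel-verified Lean document; each statement's English description precedes it below -/
import Mathlib

section
/- Let P be a lattice. A cospan [a,a'] ⊇ [b,b'] ⊆ [c,c'] in the interval poset [P] is atomic if and only if a ∨ c ≤ a' ∧ c' and [b,b'] = [a ∨ c, a' ∧ c']. -/
/-!
An atomic cospan `x ⊇ b ⊆ y` is exactly a minimal common refinement `b` of `x` and `y`. Any
common refinement forces `x` and `y` to overlap, and then their intersection `[a ⊔ c, a' ⊓ c']`
is the least common refinement, so minimality pins `b` down to it.
-/

/-- An interval in a poset `P` is a pair `(a, a')` with `a ≤ a'`. -/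
def PIvl (P : Type*) [PartialOrder P] : Type _ := {p : P × P // p.1 ≤ p.2}

/-- Intervals are partially ordered by the precision relation:
`[a,a'] ≤ [b,b']` iff `[a,a'] ⊇ [b,b']` iff `a ≤ b` and `b' ≤ a'`. -/
instance {P : Type*} [PartialOrder P] : PartialOrder (PIvl P) where
  le x y := x.1.1 ≤ y.1.1 ∧ y.1.2 ≤ x.1.2
  le_refl x := ⟨le_refl _, le_refl _⟩
  le_trans x y z h h' := ⟨h.1.trans h'.1, h'.2.trans h.2⟩
  le_antisymm x y h h' :=
    Subtype.ext (Prod.ext (le_antisymm h.1 h'.1) (le_antisymm h'.2 h.2))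

/-- In a poset (a thin category), a cospan `x ⊇ b ⊆ y` is atomic iff every `z` with
`x ⊇ z`, `y ⊇ z` and `z ⊇ b` equals `b`. -/
def IsAtomicCospan {α : Type*} [PartialOrder α] (x b y : α) : Prop :=
  x ≤ b ∧ y ≤ b ∧ ∀ z, x ≤ z → y ≤ z → z ≤ b → z = b

theorem isAtomicCospan_iff_eq_of_isLUB {α : Type*} [PartialOrder α] {x y s b : α}
    (hs : IsLUB {x, y} s) : IsAtomicCospan x b y ↔ b = s := by
  have hxs : x ≤ s := hs.1 (Set.mem_insert x {y})
  have hys : y ≤ s := hs.1 (Set.mem_insert_of_mem x rfl)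
  have hs_le {z : α} (hxz : x ≤ z) (hyz : y ≤ z) : s ≤ z :=
    hs.2 (by simp [upperBounds, hxz, hyz])
  constructor
  · rintro ⟨hxb, hyb, hmin⟩
    exact (hmin s hxs hys (hs_le hxb hyb)).symm
  · rintro rfl
    exact ⟨hxs, hys, fun z hxz hyz hzs => le_antisymm hzs (hs_le hxz hyz)⟩

namespace PIvl

variable {P : Type*} [Lattice P]

theorem sup_fst_le_inf_snd_of_le {x y b : PIvl P} (hx : x ≤ b) (hy : y ≤ b) :
    x.1.1 ⊔ y.1.1 ≤ x.1.2 ⊓ y.1.2 :=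
  le_inf (sup_le (hx.1.trans (b.2.trans hx.2)) (hy.1.trans (b.2.trans hx.2)))
    (sup_le (hx.1.trans (b.2.trans hy.2)) (hy.1.trans (b.2.trans hy.2)))

def inter (x y : PIvl P) (h : x.1.1 ⊔ y.1.1 ≤ x.1.2 ⊓ y.1.2) : PIvl P :=
  ⟨(x.1.1 ⊔ y.1.1, x.1.2 ⊓ y.1.2), h⟩

theorem inter_le_iff {x y z : PIvl P} (h : x.1.1 ⊔ y.1.1 ≤ x.1.2 ⊓ y.1.2) :
    inter x y h ≤ z ↔ x ≤ z ∧ y ≤ z := by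
  change x.1.1 ⊔ y.1.1 ≤ z.1.1 ∧ z.1.2 ≤ x.1.2 ⊓ y.1.2 ↔ _
  rw [sup_le_iff, le_inf_iff]
  exact ⟨fun ⟨⟨hx, hy⟩, hx', hy'⟩ => ⟨⟨hx, hx'⟩, hy, hy'⟩,
    fun ⟨⟨hx, hx'⟩, hy, hy'⟩ => ⟨⟨hx, hy⟩, hx', hy'⟩⟩

theorem isLUB_inter {x y : PIvl P} (h : x.1.1 ⊔ y.1.1 ≤ x.1.2 ⊓ y.1.2) :
    IsLUB {x, y} (inter x y h) := by
  refine ⟨?_, fun z hz =>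
    (inter_le_iff h).2 ⟨hz (Set.mem_insert x {y}), hz (Set.mem_insert_of_mem x rfl)⟩⟩
  have := (inter_le_iff h).1 le_rfl
  rintro z (rfl | rfl)
  exacts [this.1, this.2]

end PIvl

theorem interval_atomicCospan_iff_general {P : Type*} [Lattice P]
    (x b y : PIvl P) :
    IsAtomicCospan x b y ↔
      x.1.1 ⊔ y.1.1 ≤ x.1.2 ⊓ y.1.2 ∧ b.1 = (x.1.1 ⊔ y.1.1, x.1.2 ⊓ y.1.2) := by
  constructor
  · intro h
    have hle := PIvl.sup_fst_le_inf_snd_of_le h.1 h.2.1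
    have hb : b = PIvl.inter x y hle := (isAtomicCospan_iff_eq_of_isLUB (PIvl.isLUB_inter hle)).1 h
    exact ⟨hle, congrArg Subtype.val hb⟩
  · rintro ⟨hle, hb⟩
    exact (isAtomicCospan_iff_eq_of_isLUB (PIvl.isLUB_inter hle)).2 (Subtype.ext hb)

/-- In a lattice `P`, a cospan `[a,a'] ⊇ [b,b'] ⊆ [c,c']` in the interval poset is atomic
iff `a ⊔ c ≤ a' ⊓ c'` and `[b,b'] = [a ⊔ c, a' ⊓ c']`. -/
theorem interval_atomicCospan_iff {P : Type*} [Lattice P]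
    (x b y : PIvl P) (hx : x ≤ b) (hy : y ≤ b) :
    IsAtomicCospan x b y ↔
      x.1.1 ⊔ y.1.1 ≤ x.1.2 ⊓ y.1.2 ∧ b.1 = (x.1.1 ⊔ y.1.1, x.1.2 ⊓ y.1.2) :=
  interval_atomicCospan_iff_general x b y
end

section
/- Let f : P → Q be a lattice homomorphism (preserving binary meets and joins) between lattices. Then the induced map [f] : [P] → [Q] sends atomic cospans in [P] to atomic cospans in [Q]. -/
/-- The interval map `[f]` induced by a lattice homomorphism `f`. -/
def intervalMap {P Q : Type*} [Lattice P] [Lattice Q] (f : LatticeHom P Q) :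
    PIvl P → PIvl Q :=
  fun x => ⟨(f x.1.1, f x.1.2), (OrderHomClass.monotone f) x.2⟩

/-!
An atomic cospan `x ⊇ b ⊆ y` of intervals is exactly one where `b` is the intersection
`[x₁ ⊔ y₁, x₂ ⊓ y₂]` of `x` and `y`. A lattice homomorphism preserves `⊔` and `⊓`, hence
maps intersections to intersections.
-/

namespace PIvl

variable {P : Type*}

theorem le_iff [PartialOrder P] {x y : PIvl P} : x ≤ y ↔ x.1.1 ≤ y.1.1 ∧ y.1.2 ≤ x.1.2 :=
  Iff.rfl

theorem isAtomicCospan_iff [Lattice P] {x b y : PIvl P} :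
    IsAtomicCospan x b y ↔ b.1.1 = x.1.1 ⊔ y.1.1 ∧ b.1.2 = x.1.2 ⊓ y.1.2 := by
  constructor
  · rintro ⟨hxb, hyb, hmax⟩
    have hsup : x.1.1 ⊔ y.1.1 ≤ b.1.1 := sup_le hxb.1 hyb.1
    have hinf : b.1.2 ≤ x.1.2 ⊓ y.1.2 := le_inf hxb.2 hyb.2
    -- `x₁ ⊔ y₁ ≤ b₁ ≤ b₂ ≤ x₂ ⊓ y₂`, so the intersection of `x` and `y` is an interval below `b`.
    let z : PIvl P := ⟨(x.1.1 ⊔ y.1.1, x.1.2 ⊓ y.1.2), hsup.trans (b.2.trans hinf)⟩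
    have hzb : z = b := hmax z ⟨le_sup_left, inf_le_left⟩ ⟨le_sup_right, inf_le_right⟩ ⟨hsup, hinf⟩
    exact ⟨congrArg (·.1.1) hzb.symm, congrArg (·.1.2) hzb.symm⟩
  · rintro ⟨hb₁, hb₂⟩
    refine ⟨le_iff.2 ⟨hb₁ ▸ le_sup_left, hb₂ ▸ inf_le_left⟩,
      le_iff.2 ⟨hb₁ ▸ le_sup_right, hb₂ ▸ inf_le_right⟩, fun z hxz hyz hzb => ?_⟩
    exact le_antisymm hzb ⟨hb₁ ▸ sup_le hxz.1 hyz.1, hb₂ ▸ le_inf hxz.2 hyz.2⟩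

end PIvl

/-- A lattice homomorphism `f : P → Q` induces a map `[f] : [P] → [Q]` which sends atomic
cospans in `[P]` to atomic cospans in `[Q]`. -/
theorem intervalMap_preserves_atomicCospan {P Q : Type*} [Lattice P] [Lattice Q]
    (f : LatticeHom P Q) (x b y : PIvl P) :
    IsAtomicCospan x b y →
      IsAtomicCospan (intervalMap f x) (intervalMap f b) (intervalMap f y) := by
  simp only [PIvl.isAtomicCospan_iff]
  rintro ⟨hb₁, hb₂⟩
  exact ⟨(congrArg f hb₁).trans (map_sup f _ _), (congrArg f hb₂).trans (map_inf f _ _)⟩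
end

section
/- Let J be a finite category and C a category with all J-limits. Then the category L(C) of C-labelled intervals has all J-limits. -/
open CategoryTheory Limits

universe v u

/-- The monotone interval map `[f]` induced by a monotone map `f`. -/
def ivlMap {P Q : Type*} [PartialOrder P] [PartialOrder Q] (f : P →o Q) :
    PIvl P →o PIvl Q :=
  ⟨fun x => ⟨(f x.1.1, f x.1.2), f.monotone x.2⟩,
   fun _ _ h => ⟨f.monotone h.1, f.monotone h.2⟩⟩

/-- The interval functor `[f] : [P] ⥤ [Q]` induced by a map `f` of finite posets. -/
def ivlFunctor {P Q : FinPartOrd.{0}} (f : P ⟶ Q) : PIvl ↥P ⥤ PIvl ↥Q :=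
  (ivlMap (show (↥P →o ↥Q) from f.hom.hom)).monotone.functor

variable (C : Type u) [Category.{v} C]

/-- An object of the category `L(C)` of `C`-labelled intervals: a finite poset `P`
together with a labelling functor `X : [P] ⥤ C`. -/
structure LObj : Type (max u v 1) where
  base : FinPartOrd.{0}
  label : PIvl ↥base ⥤ C

variable {C}

/-- A morphism of `L(C)`: a monotone map `f` of base posets together with a natural
transformation `α : X ⟶ Y ∘ [f]`. -/
@[ext] structure LHom (X Y : LObj C) : Type (max u v) where
  base : X.base ⟶ Y.base
  label : X.label ⟶ ivlFunctor base ⋙ Y.label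

/-- The category `L(C)` of `C`-labelled intervals (the Grothendieck construction of
`P ↦ Func([P], C)`). -/
instance : Category (LObj C) where
  Hom := LHom
  id X := ⟨𝟙 X.base, 𝟙 X.label⟩
  comp f g := ⟨f.base ≫ g.base, f.label ≫ Functor.whiskerLeft (ivlFunctor f.base) g.label⟩
  id_comp := by
    intro X Y f
    rcases f with ⟨fb, fl⟩
    show LHom.mk fb _ = LHom.mk fb fl
    congr 1
    ext
    exact Category.id_comp _
  comp_id := by
    intro X Y f
    rcases f with ⟨fb, fl⟩
    show LHom.mk fb _ = LHom.mk fb fl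
    congr 1
    ext
    exact Category.comp_id _
  assoc := by
    intro W X Y Z f g h
    show LHom.mk _ _ = LHom.mk _ _
    congr 1
    ext
    exact Category.assoc _ _ _

/-- The underlying-shape (forgetful) functor `U : L(C) ⥤ FPos`. -/
def Ufun : LObj C ⥤ FinPartOrd.{0} where
  obj X := X.base
  map f := f.base
  map_id _ := rfl
  map_comp _ _ := rfl

section Aux

lemma ivlFunctor_comp {P Q R : FinPartOrd.{0}} (f : P ⟶ Q) (g : Q ⟶ R) :
    ivlFunctor (f ≫ g) = ivlFunctor f ⋙ ivlFunctor g := rfl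

lemma ivlFunctor_id (P : FinPartOrd.{0}) : ivlFunctor (𝟙 P) = 𝟭 _ := rfl

lemma LHom.ext' {X Y : LObj C} {f g : X ⟶ Y} (hb : LHom.base f = LHom.base g)
    (hl : LHom.label f = LHom.label g ≫ eqToHom (by rw [hb]) ) : f = g := by
  obtain ⟨fb, fl⟩ := f; obtain ⟨gb, gl⟩ := g
  cases hb
  simp only [eqToHom_refl, Category.comp_id] at hl
  rw [hl]

end Aux


lemma LHom.congr_label {X Y : LObj C} {f g : X ⟶ Y} (h : f = g) :
    LHom.label f = LHom.label g ≫ eqToHom (by rw [h]) := by subst h; simp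

lemma app_eqToHom {A : Type*} {B : Type*} [Category A] [Category B] {L M : A ⥤ B}
    (α : L ⟶ M) {x y : A} (h : x = y) :
    α.app x ≫ eqToHom (by rw [h]) = eqToHom (by rw [h]) ≫ α.app y := by subst h; simp

lemma aux_idc {E : Type*} [Category E] {a b : E} (p : a = b) (q : b = a) :
    (𝟙 a ≫ eqToHom p) ≫ eqToHom q = 𝟙 a := by simp

lemma aux_s {E : Type*} [Category E] {S A B X : E} (a' : S ⟶ B) (a : S ⟶ A) (c : A ⟶ X)
    (e4 : B = X) (h : a ≫ c = a' ≫ eqToHom e4) (e : X = B) :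
    a' ≫ 𝟙 B = a ≫ 𝟙 A ≫ c ≫ eqToHom e := by
  rw [Category.id_comp, ← Category.assoc, h]; simp

lemma comp_label {X Y Z : LObj C} (f : X ⟶ Y) (g : Y ⟶ Z) :
    LHom.label (f ≫ g) = LHom.label f ≫ Functor.whiskerLeft (ivlFunctor (LHom.base f)) (LHom.label g) := rfl

lemma comp_base {X Y Z : LObj C} (f : X ⟶ Y) (g : Y ⟶ Z) :
    LHom.base (f ≫ g) = LHom.base f ≫ LHom.base g := rfl

lemma id_label (X : LObj C) : LHom.label (𝟙 X) = 𝟙 X.label := rfl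
lemma id_base (X : LObj C) : LHom.base (𝟙 X) = 𝟙 X.base := rfl

section FPLim
variable {J : Type} [SmallCategory J] [FinCategory J] (K : J ⥤ FinPartOrd.{0})

/-- View a morphism of finite posets as a monotone map. -/
def mOf {X Y : FinPartOrd.{0}} (f : X ⟶ Y) : (X : Type) →o (Y : Type) := f.hom.hom

lemma mOf_comp {X Y Z : FinPartOrd.{0}} (f : X ⟶ Y) (g : Y ⟶ Z) (x : X) :
    mOf (f ≫ g) x = mOf g (mOf f x) := rfl

lemma mOf_congr {X Y : FinPartOrd.{0}} {f g : X ⟶ Y} (h : f = g) (x : X) :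
    mOf f x = mOf g x := by rw [h]

/-- The sections of a diagram of finite posets. -/
def Secs : Type := { s : ∀ j, (K.obj j : Type) // ∀ {j j'} (u : j ⟶ j'), mOf (K.map u) (s j) = s j' }

instance : PartialOrder (Secs K) := Subtype.partialOrder _

noncomputable instance : Fintype (Secs K) := by
  classical exact Subtype.fintype _

/-- The limit finite poset. -/
noncomputable def limPt : FinPartOrd.{0} := FinPartOrd.of (Secs K)

/-- Projections of the limit poset. -/
noncomputable def limπ (j : J) : limPt K ⟶ K.obj j :=
  FinPartOrd.ofHom (⟨fun s => s.1 j, fun _ _ h => h j⟩ : Secs K →o (K.obj j : Type))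

/-- The limit cone in `FinPartOrd`. -/
noncomputable def limCone : Cone K where
  pt := limPt K
  π := { app := limπ K
         naturality := fun j j' u => by
           apply ConcreteCategory.hom_ext; intro s; exact (s.2 u).symm }

/-- The limit cone is a limit. -/
noncomputable def limIsLimit : IsLimit (limCone K) where
  lift c := FinPartOrd.ofHom (⟨fun x => ⟨fun j => mOf (c.π.app j) x,
      fun {j j'} u => (mOf_comp (c.π.app j) (K.map u) x).symm.trans (mOf_congr (c.w u) x)⟩,
    fun {x y} h j => (mOf (c.π.app j)).monotone h⟩ : (c.pt : Type) →o Secs K)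
  fac c j := rfl
  uniq c m hm := by
    apply ConcreteCategory.hom_ext; intro x
    apply Subtype.ext; funext j
    exact mOf_congr (hm j) x

end FPLim

section Main
variable {J : Type} [SmallCategory J] [FinCategory J] [HasLimitsOfShape J C] (F : J ⥤ LObj C)

/-- The limit of the underlying posets. -/
noncomputable def Pinf : FinPartOrd.{0} := limPt (F ⋙ Ufun)

/-- Projections from the limit poset. -/
noncomputable def pproj (j : J) : Pinf F ⟶ (F.obj j).base := limπ (F ⋙ Ufun) j

omit [HasLimitsOfShape J C] in
lemma pproj_w {j j' : J} (u : j ⟶ j') :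
    pproj F j ≫ LHom.base (F.map u) = pproj F j' :=
  (limCone (F ⋙ Ufun)).w u

/-- The diagram of labellings, pulled back to the limit poset. -/
noncomputable def Gdiag : J ⥤ (PIvl ↥(Pinf F) ⥤ C) where
  obj j := ivlFunctor (pproj F j) ⋙ (F.obj j).label
  map {j j'} u := Functor.whiskerLeft (ivlFunctor (pproj F j)) (LHom.label (F.map u)) ≫
    eqToHom (by rw [← Functor.assoc, ← ivlFunctor_comp, pproj_w])
  map_id j := by
    ext i
    have h2 := NatTrans.congr_app (LHom.congr_label (F.map_id j)) ((ivlFunctor (pproj F j)).obj i)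
    simp only [id_label, NatTrans.id_app, Category.id_comp] at h2
    dsimp
    rw [h2]
    erw [NatTrans.comp_app]
    simp [eqToHom_app]
    exact aux_idc (E := C) _ _
  map_comp {j j' j''} u v := by
    ext i
    have h2 := NatTrans.congr_app (LHom.congr_label (F.map_comp u v)) ((ivlFunctor (pproj F j)).obj i)
    simp only [comp_label, NatTrans.comp_app, Functor.whiskerLeft_app] at h2
    dsimp
    rw [h2]
    have w : (ivlFunctor (LHom.base (F.map u))).obj ((ivlFunctor (pproj F j)).obj i) =
        (ivlFunctor (pproj F j')).obj i :=
      congrArg (fun f : Pinf F ⟶ (F.obj j').base => (ivlFunctor f).obj i) (pproj_w F u)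
    simp only [eqToHom_app, Category.assoc]
    rw [← eqToHom_naturality_assoc (z := fun b => (F.map v).label.app b) (w := w)]
    erw [NatTrans.comp_app, NatTrans.comp_app]
    simp
    exact Category.assoc _ _ _


/-- The limit cone in `L(C)`. -/
noncomputable def LCone : Cone F where
  pt := ⟨Pinf F, limit (Gdiag F)⟩
  π := { app := fun j => ⟨pproj F j, limit.π (Gdiag F) j⟩
         naturality := fun j j' u => by
           have hic : ((Functor.const J).obj (⟨Pinf F, limit (Gdiag F)⟩ : LObj C)).map u ≫
               (⟨pproj F j', limit.π (Gdiag F) j'⟩ : LHom _ _) = ⟨pproj F j', limit.π (Gdiag F) j'⟩ :=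
             Category.id_comp _
           rw [hic]
           refine LHom.ext' (pproj_w F u).symm ?_
           show limit.π (Gdiag F) j' = _
           rw [← limit.w (Gdiag F) u]
           show limit.π (Gdiag F) j ≫ Functor.whiskerLeft (ivlFunctor (pproj F j)) (F.map u).label ≫ eqToHom _ =
             (limit.π (Gdiag F) j ≫ Functor.whiskerLeft (ivlFunctor (pproj F j)) (F.map u).label) ≫ eqToHom _
           exact (Category.assoc _ _ _).symm }

variable {F} (s : Cone F)

/-- The lifted map of base posets. -/
noncomputable def philift : s.pt.base ⟶ Pinf F :=
  (limIsLimit (F ⋙ Ufun)).lift (Ufun.mapCone s)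

lemma philift_fac (j : J) : philift s ≫ pproj F j = LHom.base (s.π.app j) :=
  (limIsLimit (F ⋙ Ufun)).fac (Ufun.mapCone s) j

/-- Pullback of labellings along the lifted map. -/
noncomputable def Wfun : (PIvl ↥(Pinf F) ⥤ C) ⥤ (PIvl ↥(s.pt.base) ⥤ C) :=
  (Functor.whiskeringLeft _ _ C).obj (ivlFunctor (philift s))

lemma sCone_eq (j : J) :
    ivlFunctor (LHom.base (s.π.app j)) ⋙ (F.obj j).label = (Gdiag F ⋙ Wfun s).obj j := by
  dsimp only [Functor.comp_obj, Wfun, Gdiag, Functor.whiskeringLeft]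
  rw [← Functor.assoc, ← ivlFunctor_comp, philift_fac]

/-- The cone over the pulled-back diagram induced by a cone `s`. -/
noncomputable def sCone : Cone (Gdiag F ⋙ Wfun s) where
  pt := s.pt.label
  π := { app := fun j => LHom.label (s.π.app j) ≫ eqToHom (sCone_eq s j)
         naturality := fun j j' u => by
           have hic : ((Functor.const J).obj s.pt.label).map u ≫
               ((s.π.app j').label ≫ eqToHom (sCone_eq s j')) =
               (s.π.app j').label ≫ eqToHom (sCone_eq s j') :=
             Category.id_comp _
           rw [hic]
           ext i
           have h2 := NatTrans.congr_app (LHom.congr_label (s.w u)) i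
           simp only [comp_label, NatTrans.comp_app, Functor.whiskerLeft_app, eqToHom_app] at h2
           dsimp [Wfun, Gdiag]
           simp only [eqToHom_app, Category.assoc, Category.id_comp, Category.comp_id]
           exact aux_s (E := C) _ _ _ _ h2 _ }

noncomputable instance : PreservesLimitsOfShape J (Wfun s) :=
  inferInstanceAs (PreservesLimitsOfShape J
    ((Functor.whiskeringLeft (PIvl ↥(s.pt.base)) (PIvl ↥(Pinf F)) C).obj (ivlFunctor (philift s))))

/-- The lifted map of labellings. -/
noncomputable def labellift : s.pt.label ⟶ (Wfun s).obj (limit (Gdiag F)) :=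
  (isLimitOfPreserves (Wfun s) (limit.isLimit (Gdiag F))).lift (sCone s)

lemma labellift_fac (j : J) :
    labellift s ≫ Functor.whiskerLeft (ivlFunctor (philift s)) (limit.π (Gdiag F) j) =
      (sCone s).π.app j :=
  (isLimitOfPreserves (Wfun s) (limit.isLimit (Gdiag F))).fac (sCone s) j

variable (F)

/-- The limit cone is a limit. -/
noncomputable def LIsLimit : IsLimit (LCone F) where
  lift s := ⟨philift s, labellift s⟩
  fac s j := by
    refine LHom.ext' (philift_fac s j) ?_
    exact labellift_fac s j
  uniq s m hm := by
    obtain ⟨mb, ml⟩ := m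
    have hb : mb = philift s :=
      (limIsLimit (F ⋙ Ufun)).uniq (Ufun.mapCone s) mb
        (fun j => congrArg LHom.base (hm j))
    subst hb
    have hl : ml = labellift s :=
      (isLimitOfPreserves (Wfun s) (limit.isLimit (Gdiag F))).uniq (sCone s) ml
        (fun j => LHom.congr_label (hm j))
    exact LHom.ext' rfl (by rw [hl]; exact (Category.comp_id _).symm)

end Main


/-- If `J` is a finite category and `C` has all `J`-limits, then the category `L(C)` of
`C`-labelled intervals has all `J`-limits. -/
theorem labelledIntervals_hasLimitsOfShape (J : Type) [SmallCategory J] [FinCategory J]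
    [HasLimitsOfShape J C] : HasLimitsOfShape J (LObj C) :=
  ⟨fun F => HasLimit.mk ⟨LCone F, LIsLimit F⟩⟩
end

section
/- Let C be a category with finite products, and let X : [P] → C and Y : [Q] → C be local functors (preserving pullbacks of atomic cospans) on interval posets of lattices P and Q. Then the functor W : [P × Q] ≅ [P] × [Q] → C defined by W([a,a'],[b,b']) = X[a,a'] × Y[b,b'] is local. -/
open CategoryTheory Limits

/-- The pullback (meet) of the intervals `[a,a']` and `[c,c']`: the interval
`[a ⊓ c, a' ⊔ c']`. -/
def ivlMeet {P : Type*} [Lattice P] (x y : PIvl P) : PIvl P :=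
  ⟨(x.1.1 ⊓ y.1.1, x.1.2 ⊔ y.1.2), inf_le_left.trans (x.2.trans le_sup_left)⟩

theorem ivlMeet_le_left {P : Type*} [Lattice P] (x y : PIvl P) : ivlMeet x y ≤ x :=
  ⟨inf_le_left, le_sup_left⟩

theorem ivlMeet_le_right {P : Type*} [Lattice P] (x y : PIvl P) : ivlMeet x y ≤ y :=
  ⟨inf_le_right, le_sup_right⟩

/-- A functor `X : [P] → C` on the interval poset of a lattice `P` is *local* if it
preserves pullbacks of atomic cospans: for every atomic cospan `x ⊇ b ⊆ y` (atomicity in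
the thin category `[P]` meaning every common refinement `z` of `x` and `y` with `z ⊇ b`
equals `b`), the image under `X` of the pullback square on `ivlMeet x y` is a pullback
square in `C`. -/
def IsLocalFunctor {P : Type*} [Lattice P] {C : Type*} [Category C]
    (X : PIvl P ⥤ C) : Prop :=
  ∀ (x y b : PIvl P) (hx : x ≤ b) (hy : y ≤ b),
    (∀ z, x ≤ z → y ≤ z → z ≤ b → z = b) →
    IsPullback (X.map (homOfLE (ivlMeet_le_left x y)))
      (X.map (homOfLE (ivlMeet_le_right x y)))
      (X.map (homOfLE hx)) (X.map (homOfLE hy))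

/-- The projection `[P × Q] → [P]`. -/
def ivlFst {P Q : Type*} [PartialOrder P] [PartialOrder Q] :
    PIvl (P × Q) →o PIvl P :=
  ⟨fun i => ⟨(i.1.1.1, i.1.2.1), i.2.1⟩, fun _ _ h => ⟨h.1.1, h.2.1⟩⟩

/-- The projection `[P × Q] → [Q]`. -/
def ivlSnd {P Q : Type*} [PartialOrder P] [PartialOrder Q] :
    PIvl (P × Q) →o PIvl Q :=
  ⟨fun i => ⟨(i.1.1.2, i.1.2.2), i.2.2⟩, fun _ _ h => ⟨h.1.2, h.2.2⟩⟩

/-- The pointwise product labelling `W([a,a'],[b,b']) = X[a,a'] ⨯ Y[b,b']` on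
`[P × Q] ≅ [P] × [Q]`. -/
noncomputable def prodLabel {P Q : Type*} [Lattice P] [Lattice Q]
    {C : Type*} [Category C] [HasFiniteProducts C]
    (X : PIvl P ⥤ C) (Y : PIvl Q ⥤ C) : PIvl (P × Q) ⥤ C where
  obj i := X.obj (ivlFst i) ⨯ Y.obj (ivlSnd i)
  map h := prod.map (X.map (ivlFst.monotone.functor.map h))
    (Y.map (ivlSnd.monotone.functor.map h))
  map_comp f g := by
    rw [prod.map_map]
    congr 1
    · first | exact X.map_comp _ _ | (erw [← X.map_comp]; rfl)
    · first | exact Y.map_comp _ _ | (erw [← Y.map_comp]; rfl)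


open CategoryTheory Limits in
theorem isPullback_prodMap {C : Type*} [Category C] [HasBinaryProducts C]
    {W₁ X₁ Y₁ Z₁ W₂ X₂ Y₂ Z₂ : C}
    {f₁ : W₁ ⟶ X₁} {g₁ : W₁ ⟶ Y₁} {h₁ : X₁ ⟶ Z₁} {k₁ : Y₁ ⟶ Z₁}
    {f₂ : W₂ ⟶ X₂} {g₂ : W₂ ⟶ Y₂} {h₂ : X₂ ⟶ Z₂} {k₂ : Y₂ ⟶ Z₂}
    (H₁ : IsPullback f₁ g₁ h₁ k₁) (H₂ : IsPullback f₂ g₂ h₂ k₂) :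
    IsPullback (prod.map f₁ f₂) (prod.map g₁ g₂) (prod.map h₁ h₂) (prod.map k₁ k₂) := by
  have w : prod.map f₁ f₂ ≫ prod.map h₁ h₂ = prod.map g₁ g₂ ≫ prod.map k₁ k₂ := by
    rw [prod.map_map, prod.map_map, H₁.w, H₂.w]
  refine IsPullback.of_isLimit' ⟨w⟩ ?_
  refine PullbackCone.IsLimit.mk _ (fun s => prod.lift
      (H₁.lift (s.fst ≫ prod.fst) (s.snd ≫ prod.fst) ?_)
      (H₂.lift (s.fst ≫ prod.snd) (s.snd ≫ prod.snd) ?_)) ?_ ?_ ?_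
  · simpa using s.condition =≫ prod.fst
  · simpa using s.condition =≫ prod.snd
  · intro s; ext <;> simp; exacts [by rw [prod.lift_fst], by rw [prod.lift_snd]]
  · intro s; ext <;> simp; exacts [by rw [prod.lift_fst], by rw [prod.lift_snd]]
  · intro s m hm₁ hm₂
    ext
    · apply H₁.hom_ext <;> simp [← hm₁, ← hm₂] <;> rw [prod.lift_fst_assoc] <;> simp
    · apply H₂.hom_ext <;> simp [← hm₁, ← hm₂] <;> rw [prod.lift_snd_assoc] <;> simp

/-- If `C` has finite products and `X : [P] → C`, `Y : [Q] → C` are local functors on the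
interval posets of lattices `P` and `Q`, then the pointwise product functor
`W : [P × Q] → C`, `W([a,a'],[b,b']) = X[a,a'] ⨯ Y[b,b']`, is local. -/
theorem prodLabel_isLocal {P Q : Type*} [Lattice P] [Lattice Q]
    {C : Type*} [Category C] [HasFiniteProducts C]
    (X : PIvl P ⥤ C) (Y : PIvl Q ⥤ C)
    (hX : IsLocalFunctor X) (hY : IsLocalFunctor Y) :
    IsLocalFunctor (prodLabel X Y) := by
  intro x y b hx hy hb
  -- `b` is the componentwise join of `x` and `y`
  have hz0 : x.1.1 ⊔ y.1.1 ≤ x.1.2 ⊓ y.1.2 :=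
    le_trans (sup_le hx.1 hy.1) (le_trans b.2 (le_inf hx.2 hy.2))
  have hb' : b = ⟨(x.1.1 ⊔ y.1.1, x.1.2 ⊓ y.1.2), hz0⟩ :=
    (hb ⟨(x.1.1 ⊔ y.1.1, x.1.2 ⊓ y.1.2), hz0⟩
      ⟨le_sup_left, inf_le_left⟩ ⟨le_sup_right, inf_le_right⟩
      ⟨sup_le hx.1 hy.1, le_inf hx.2 hy.2⟩).symm
  have hbP : ∀ z, ivlFst x ≤ z → ivlFst y ≤ z → z ≤ ivlFst b → z = ivlFst b := by
    intro z h1 h2 h3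
    subst hb'
    exact Subtype.ext (Prod.ext
      (le_antisymm h3.1 (sup_le h1.1 h2.1)) (le_antisymm (le_inf h1.2 h2.2) h3.2))
  have hbQ : ∀ z, ivlSnd x ≤ z → ivlSnd y ≤ z → z ≤ ivlSnd b → z = ivlSnd b := by
    intro z h1 h2 h3
    subst hb'
    exact Subtype.ext (Prod.ext
      (le_antisymm h3.1 (sup_le h1.1 h2.1)) (le_antisymm (le_inf h1.2 h2.2) h3.2))
  have HX := hX (ivlFst x) (ivlFst y) (ivlFst b) (ivlFst.monotone hx) (ivlFst.monotone hy) hbP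
  have HY := hY (ivlSnd x) (ivlSnd y) (ivlSnd b) (ivlSnd.monotone hx) (ivlSnd.monotone hy) hbQ
  exact isPullback_prodMap HX HY
end
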